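/- For all natural numbers s ≥ 1, q ≥ 0, and all x: Σ_{n=0}^{q} (-1)^{n+q} F_{2sn}(x)² = F_{2s}(x)² · ( binom(q+1,4)_{F_s(x)} + (-1)^{s+1}·L_{2s}(x)·binom(q+2,4)_{F_s(x)} + binom(q+3,4)_{F_s(x)} ), where binom(m,4)_{F_s(x)} is the s-Fibopolynomial. -/

import Mathlib

/-!
Over `ℝ` write `x = α + β` with `αβ = -1` and `α ≠ β` (the discriminant `x² + 4` is positive). By
Binet's formula `(α - β) F_n(x) = αⁿ - βⁿ`, so `F_{sm}(x) = F_s(x) U_m`, where `U` is the Lucas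
sequence with `P = αˢ + βˢ = L_s(x)` and `Q = (αβ)ˢ = (-1)ˢ`, and `L_{2s}(x) = P² - 2Q`. The identity
thus becomes one for Lucas sequences with `Q = ±1`, proved by induction on `q`: two consecutive
alternating sums add up to `U_{2q+2}²`, and the identity expressing `U_{2q+2}²` through the products
`U_m U_{m-1} U_{m-2} U_{m-3}` is, for `q ≥ 2`, a polynomial identity in `U_{q-1}` and `U_{q-2}`.
-/

/-- Fibonacci polynomials evaluated at a real `x`. -/
def fibP : ℕ → ℝ → ℝ
  | 0, _ => 0
  | 1, _ => 1
  | n + 2, x => x * fibP (n + 1) x + fibP n x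

/-- Lucas polynomials evaluated at a real `x`. -/
def lucasP : ℕ → ℝ → ℝ
  | 0, _ => 2
  | 1, x => x
  | n + 2, x => x * lucasP (n + 1) x + lucasP n x

/-- Numerator of the `s`-Fibopolynomial `binom(m,4)_{F_s(x)}`:
`F_{sm}·F_{s(m-1)}·F_{s(m-2)}·F_{s(m-3)}` (it vanishes for `m < 4`). -/
def sFiboNum4 (s m : ℕ) (x : ℝ) : ℝ :=
  ∏ i ∈ Finset.range 4, fibP (s * (m - i)) x

/-- Denominator of the `s`-Fibopolynomial `binom(m,4)_{F_s(x)}`: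
`F_s·F_{2s}·F_{3s}·F_{4s}`. -/
def sFiboDen4 (s : ℕ) (x : ℝ) : ℝ :=
  ∏ i ∈ Finset.range 4, fibP (s * (i + 1)) x

open Finset

section LucasSequence

variable {R : Type*} [CommRing R]

def lucasU (P Q : R) : ℕ → R
  | 0 => 0
  | 1 => 1
  | n + 2 => P * lucasU P Q (n + 1) - Q * lucasU P Q n

variable (P Q : R)

@[simp] lemma lucasU_zero : lucasU P Q 0 = 0 := rfl

@[simp] lemma lucasU_one : lucasU P Q 1 = 1 := rfl

lemma lucasU_add_two (n : ℕ) :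
    lucasU P Q (n + 2) = P * lucasU P Q (n + 1) - Q * lucasU P Q n := rfl

@[simp] lemma lucasU_two : lucasU P Q 2 = P := by simp [lucasU_add_two P Q 0]

lemma lucasU_add (m n : ℕ) :
    lucasU P Q (m + n + 1) =
      lucasU P Q (m + 1) * lucasU P Q (n + 1) - Q * lucasU P Q m * lucasU P Q n := by
  induction n using Nat.twoStepInduction with
  | zero => simp
  | one => rw [lucasU_two, lucasU_one, lucasU_add_two]; ring
  | more n ih ih' =>
    rw [show m + (n + 2) + 1 = m + n + 1 + 2 by ring, lucasU_add_two, ih,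
      show m + n + 1 + 1 = m + (n + 1) + 1 by ring, ih', lucasU_add_two P Q (n + 1),
      lucasU_add_two P Q n]
    ring

lemma sub_mul_lucasU (α β : R) (n : ℕ) :
    (α - β) * lucasU (α + β) (α * β) n = α ^ n - β ^ n := by
  induction n using Nat.twoStepInduction with
  | zero => simp
  | one => simp
  | more n ih ih' =>
    rw [lucasU_add_two]
    linear_combination (α + β) * ih' - α * β * ih

def lucasUNum4 (m : ℕ) : R := ∏ i ∈ range 4, lucasU P Q (m - i)

def lucasUDen4 : R := ∏ i ∈ range 4, lucasU P Q (i + 1)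

lemma lucasUNum4_add_three (k : ℕ) :
    lucasUNum4 P Q (k + 3) =
      lucasU P Q (k + 3) * lucasU P Q (k + 2) * lucasU P Q (k + 1) * lucasU P Q k := by
  simp [lucasUNum4, prod_range_succ]

lemma lucasUDen4_mul_lucasU_sq (hQ : Q = 1 ∨ Q = -1) (q : ℕ) :
    lucasUDen4 P Q * lucasU P Q (2 * q + 2) ^ 2 =
      P ^ 2 * (lucasUNum4 P Q (q + 1) +
        (3 - Q * P ^ 2) * (lucasUNum4 P Q (q + 2) + lucasUNum4 P Q (q + 3)) +
          lucasUNum4 P Q (q + 4)) := by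
  match q with
  | 0 | 1 =>
    simp only [lucasUDen4, prod_range_succ, range_one, prod_singleton, zero_add, lucasU_one,
      Nat.reduceAdd, lucasU_add_two, mul_one, lucasU_zero, mul_zero, sub_zero, one_mul, lucasUNum4,
      tsub_zero, tsub_self, Nat.one_le_ofNat, Nat.sub_eq_zero_of_le, Nat.add_one_sub_one,
      Nat.reduceLeDiff, Nat.reduceSub, add_zero]
    rcases hQ with rfl | rfl <;> ring
  | k + 2 =>
    rw [show 2 * (k + 2) + 2 = k + 2 + (k + 3) + 1 by ring, lucasU_add,
      lucasUNum4_add_three P Q k, lucasUNum4_add_three P Q (k + 1),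
      lucasUNum4_add_three P Q (k + 2), lucasUNum4_add_three P Q (k + 3)]
    simp only [lucasUDen4, prod_range_succ, range_one, prod_singleton, zero_add, lucasU_one,
      Nat.reduceAdd, lucasU_add_two, mul_one, lucasU_zero, mul_zero, sub_zero, one_mul]
    rcases hQ with rfl | rfl <;> ring

theorem lucasUDen4_mul_sum_alternating (hQ : Q = 1 ∨ Q = -1) (q : ℕ) :
    lucasUDen4 P Q * ∑ n ∈ range (q + 1), (-1 : R) ^ (n + q) * lucasU P Q (2 * n) ^ 2 =
      P ^ 2 * (lucasUNum4 P Q (q + 1) - Q * (P ^ 2 - 2 * Q) * lucasUNum4 P Q (q + 2) +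
        lucasUNum4 P Q (q + 3)) := by
  induction q with
  | zero => simp [lucasUNum4, prod_range_succ]
  | succ q ih =>
    have hsum : ∑ n ∈ range (q + 2), (-1 : R) ^ (n + (q + 1)) * lucasU P Q (2 * n) ^ 2 =
        lucasU P Q (2 * q + 2) ^ 2 -
          ∑ n ∈ range (q + 1), (-1 : R) ^ (n + q) * lucasU P Q (2 * n) ^ 2 := by
      rw [sum_range_succ, sub_eq_neg_add, ← sum_neg_distrib]
      congr 1
      · refine sum_congr rfl fun n _ => ?_
        rw [← add_assoc, pow_succ]
        ring
      · rw [show q + 1 + (q + 1) = 2 * (q + 1) by ring, pow_mul]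
        simp [mul_add]
    have hQ2 : Q ^ 2 = 1 := by rcases hQ with rfl | rfl <;> norm_num
    rw [hsum]
    linear_combination lucasUDen4_mul_lucasU_sq P Q hQ q - ih -
      2 * P ^ 2 * (lucasUNum4 P Q (q + 2) + lucasUNum4 P Q (q + 3)) * hQ2

end LucasSequence

lemma fibP_eq_lucasU (x : ℝ) (n : ℕ) : fibP n x = lucasU x (-1) n := by
  induction n using Nat.twoStepInduction with
  | zero => rfl
  | one => rfl
  | more n ih ih' => rw [fibP, lucasU_add_two, ih, ih']; ring

lemma lucasP_add_eq_pow_add_pow {α β : ℝ} (hαβ : α * β = -1) (n : ℕ) :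
    lucasP n (α + β) = α ^ n + β ^ n := by
  induction n using Nat.twoStepInduction with
  | zero => norm_num [lucasP]
  | one => simp [lucasP]
  | more n ih ih' => rw [lucasP, ih, ih']; linear_combination (α ^ n + β ^ n) * hαβ

lemma sub_mul_fibP_add {α β : ℝ} (hαβ : α * β = -1) (n : ℕ) :
    (α - β) * fibP n (α + β) = α ^ n - β ^ n := by
  rw [fibP_eq_lucasU, ← hαβ, sub_mul_lucasU]

lemma fibP_mul_eq {α β : ℝ} (hαβ : α * β = -1) (hne : α ≠ β) (s m : ℕ) :
    fibP (s * m) (α + β) = fibP s (α + β) * lucasU (α ^ s + β ^ s) (α ^ s * β ^ s) m := by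
  apply mul_left_cancel₀ (sub_ne_zero.2 hne)
  rw [sub_mul_fibP_add hαβ, ← mul_assoc, sub_mul_fibP_add hαβ, sub_mul_lucasU, pow_mul, pow_mul]

lemma exists_add_eq_mul_eq_neg_one (x : ℝ) : ∃ α β : ℝ, α + β = x ∧ α * β = -1 ∧ α ≠ β := by
  have hd : 0 < x ^ 2 + 4 := by positivity
  refine ⟨(x + √(x ^ 2 + 4)) / 2, (x - √(x ^ 2 + 4)) / 2, by ring, ?_, ?_⟩
  · linear_combination -Real.sq_sqrt hd.le / 4
  · have := Real.sqrt_pos.2 hd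
    intro h
    linarith

theorem stmt_18_general (s q : ℕ) (x : ℝ) :
    sFiboDen4 s x * ∑ n ∈ Finset.range (q + 1), (-1 : ℝ) ^ (n + q) * (fibP (2 * s * n) x) ^ 2 =
      (fibP (2 * s) x) ^ 2 *
        (sFiboNum4 s (q + 1) x + (-1 : ℝ) ^ (s + 1) * lucasP (2 * s) x * sFiboNum4 s (q + 2) x +
          sFiboNum4 s (q + 3) x) := by
  obtain ⟨α, β, rfl, hαβ, hne⟩ := exists_add_eq_mul_eq_neg_one x
  have hF := fibP_mul_eq hαβ hne s
  have hQ : α ^ s * β ^ s = (-1) ^ s := by rw [← mul_pow, hαβ]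
  set P := α ^ s + β ^ s
  set Q := α ^ s * β ^ s
  have hden : sFiboDen4 s (α + β) = fibP s (α + β) ^ 4 * lucasUDen4 P Q := by
    simp only [sFiboDen4, lucasUDen4, hF, prod_mul_distrib, prod_const, card_range]
  have hnum (m : ℕ) : sFiboNum4 s m (α + β) = fibP s (α + β) ^ 4 * lucasUNum4 P Q m := by
    simp only [sFiboNum4, lucasUNum4, hF, prod_mul_distrib, prod_const, card_range]
  have hsum : ∑ n ∈ range (q + 1), (-1 : ℝ) ^ (n + q) * fibP (2 * s * n) (α + β) ^ 2 =
      fibP s (α + β) ^ 2 * ∑ n ∈ range (q + 1), (-1 : ℝ) ^ (n + q) * lucasU P Q (2 * n) ^ 2 := by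
    rw [mul_sum]
    refine sum_congr rfl fun n _ => ?_
    rw [show 2 * s * n = s * (2 * n) by ring, hF]
    ring
  have h2s : fibP (2 * s) (α + β) = fibP s (α + β) * P := by rw [mul_comm, hF, lucasU_two]
  have hL : lucasP (2 * s) (α + β) = P ^ 2 - 2 * Q := by
    rw [lucasP_add_eq_pow_add_pow hαβ, pow_mul', pow_mul']
    ring
  have hsign : (-1 : ℝ) ^ (s + 1) = -Q := by rw [hQ, pow_succ, mul_neg_one]
  rw [hden, hnum, hnum, hnum, hsum, h2s, hL, hsign]
  linear_combination fibP s (α + β) ^ 6 *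
    lucasUDen4_mul_sum_alternating P Q (hQ ▸ neg_one_pow_eq_or ℝ s) q

/-- Identity (4.37), stated after clearing the denominator
`F_s(x)·F_{2s}(x)·F_{3s}(x)·F_{4s}(x)` of the s-Fibopolynomials `binom(·,4)_{F_s(x)}`. -/
theorem stmt_18 (s q : ℕ) (hs : 1 ≤ s) (x : ℝ) :
    sFiboDen4 s x * ∑ n ∈ Finset.range (q + 1), (-1 : ℝ) ^ (n + q) * (fibP (2 * s * n) x) ^ 2 =
      (fibP (2 * s) x) ^ 2 *
        (sFiboNum4 s (q + 1) x + (-1 : ℝ) ^ (s + 1) * lucasP (2 * s) x * sFiboNum4 s (q + 2) x +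
          sFiboNum4 s (q + 3) x) :=
  stmt_18_general s q x
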